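/- arXiv:2510.16638 — 2 statements merged into one kernel-verified Lean document; each statement's English description precedes it below -/
import Mathlib

section
/- Assume m = k (the case σ = τ, so S = {u ∈ ℤ^n : ⟨p_r, u⟩ ≥ 0 for r = 1, …, k}). Then the set of points equipped with the operation * is a group with identity element x_τ: * is associative, x_τ is a two-sided identity, and every point has a two-sided inverse. (This is the point-level statement of Proposition 3.3: the comultiplication χ^u ↦ χ^u ⊗ χ^u ∏_r (1 ⊗ χ^{e_1^{(r)}} + χ^{e_2^{(r)}} ⊗ 1)^{⟨p_r,u⟩} on K[S_τ] gives the group multiplication of the semidirect product G_χ̄ = 𝔾_a^k ⋊ T.) -/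
open Finset

def pairZ {n : ℕ} (v u : Fin n → ℤ) : ℤ := ∑ i, v i * u i

def InS {n m : ℕ} (q : Fin m → Fin n → ℤ) (u : Fin n → ℤ) : Prop :=
  ∀ j, 0 ≤ pairZ (q j) u

def IsPoint {n m : ℕ} {K : Type*} [Field K] (q : Fin m → Fin n → ℤ)
    (x : (Fin n → ℤ) → K) : Prop :=
  x 0 = 1 ∧ ∀ u v : Fin n → ℤ, InS q u → InS q v → x (u + v) = x u * x v

def Compatible {n m k : ℕ} (hkm : k ≤ m) (q : Fin m → Fin n → ℤ)
    (e : Fin k → Fin n → ℤ) : Prop :=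
  (∀ r s : Fin k, pairZ (q (Fin.castLE hkm s)) (e r) = if r = s then -1 else 0) ∧
  (∀ (r : Fin k) (j : Fin m), k ≤ (j : ℕ) → 0 ≤ pairZ (q j) (e r))

noncomputable def rmul {n m k : ℕ} {K : Type*} [Field K] (hkm : k ≤ m)
    (q : Fin m → Fin n → ℤ) (e1 e2 : Fin k → Fin n → ℤ)
    (x y : (Fin n → ℤ) → K) : (Fin n → ℤ) → K :=
  fun u =>
    ∑ i ∈ Fintype.piFinset (fun r : Fin k =>
        Finset.range ((pairZ (q (Fin.castLE hkm r)) u).toNat + 1)),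
      (∏ r : Fin k, ((pairZ (q (Fin.castLE hkm r)) u).toNat.choose (i r) : K)) *
        x (u + ∑ r : Fin k, (i r : ℤ) • e2 r) *
        y (u + ∑ r : Fin k, (pairZ (q (Fin.castLE hkm r)) u - (i r : ℤ)) • e1 r)

noncomputable def xtau {n m k : ℕ} (K : Type*) [Field K] (hkm : k ≤ m)
    (q : Fin m → Fin n → ℤ) : (Fin n → ℤ) → K :=
  fun u => if ∀ r : Fin k, pairZ (q (Fin.castLE hkm r)) u = 0 then 1 else 0

/-!
Let `π u = u + ∑ r, ⟨p_r, u⟩ e1 r`; it lands in the lattice `τ^⊥` (which lies in `S` since `σ = τ`),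
and `u = π u + ∑ r, ⟨p_r, u⟩ (-e1 r)`. Hence a point `x` is determined on `S` by its torus part
`x|τ^⊥`, a character, and its additive part `a r = x (-e1 r)`. Expanding the defining sum of `x * y`
with the binomial theorem shows that `x * y` has torus part the pointwise product and additive part
`a r + x (f r) b r` with `f r = e2 r - e1 r ∈ τ^⊥`: this is the multiplication of `𝔾_a^k ⋊ T`, and
the group axioms reduce to identities between coordinates.
-/

section Pairing

variable {n m : ℕ}

lemma pairZ_add (v a b : Fin n → ℤ) : pairZ v (a + b) = pairZ v a + pairZ v b :=
  dotProduct_add v a b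

lemma pairZ_neg (v a : Fin n → ℤ) : pairZ v (-a) = -pairZ v a :=
  dotProduct_neg v a

lemma pairZ_sub (v a b : Fin n → ℤ) : pairZ v (a - b) = pairZ v a - pairZ v b :=
  dotProduct_sub v a b

lemma pairZ_smul (v : Fin n → ℤ) (c : ℤ) (a : Fin n → ℤ) : pairZ v (c • a) = c * pairZ v a :=
  dotProduct_smul c v a

lemma pairZ_sum {ι : Type*} (v : Fin n → ℤ) (T : Finset ι) (g : ι → Fin n → ℤ) :
    pairZ v (∑ r ∈ T, g r) = ∑ r ∈ T, pairZ v (g r) :=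
  dotProduct_sum v T g

lemma inS_add {q : Fin m → Fin n → ℤ} {u v : Fin n → ℤ} (hu : InS q u) (hv : InS q v) :
    InS q (u + v) := fun j => by
  rw [pairZ_add]; exact add_nonneg (hu j) (hv j)

lemma inS_natCast_smul {q : Fin m → Fin n → ℤ} {u : Fin n → ℤ} (hu : InS q u) (c : ℕ) :
    InS q ((c : ℤ) • u) := fun j => by
  rw [pairZ_smul]; exact mul_nonneg (Int.natCast_nonneg c) (hu j)

lemma inS_of_pairZ_eq_zero {q : Fin m → Fin n → ℤ} {u : Fin n → ℤ}
    (hu : ∀ j, pairZ (q j) u = 0) : InS q u :=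
  fun j => (hu j).ge

end Pairing

namespace IsPoint

variable {n m : ℕ} {K : Type*} [Field K] {q : Fin m → Fin n → ℤ} {x : (Fin n → ℤ) → K}

lemma congr (hx : IsPoint q x) {y : (Fin n → ℤ) → K} (hxy : ∀ u, InS q u → x u = y u) :
    IsPoint q y := by
  have h0 : InS q (0 : Fin n → ℤ) := inS_of_pairZ_eq_zero fun j => by simp [pairZ]
  refine ⟨hxy 0 h0 ▸ hx.1, fun u v hu hv => ?_⟩
  rw [← hxy _ (inS_add hu hv), ← hxy u hu, ← hxy v hv, hx.2 u v hu hv]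

lemma map_natCast_smul (hx : IsPoint q x) {s : Fin n → ℤ} (hs : InS q s) (c : ℕ) :
    x ((c : ℤ) • s) = x s ^ c := by
  induction c with
  | zero => simpa using hx.1
  | succ c ih =>
    rw [Nat.cast_succ, add_smul, one_smul, hx.2 _ _ (inS_natCast_smul hs c) hs, ih, pow_succ]

lemma map_add_sum_smul (hx : IsPoint q x) {ι : Type*} (s : ι → Fin n → ℤ)
    (hs : ∀ r, InS q (s r)) (c : ι → ℕ) (T : Finset ι) {v : Fin n → ℤ} (hv : InS q v) :
    x (v + ∑ r ∈ T, (c r : ℤ) • s r) = x v * ∏ r ∈ T, x (s r) ^ c r := by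
  classical
  induction T using Finset.induction_on generalizing v with
  | empty => simp
  | @insert a T ha ih =>
    have hva : InS q (v + (c a : ℤ) • s a) := inS_add hv (inS_natCast_smul (hs a) (c a))
    rw [sum_insert ha, prod_insert ha, ← add_assoc, ih hva, hx.2 _ _ hv (inS_natCast_smul (hs a) _),
      hx.map_natCast_smul (hs a), mul_assoc]

lemma mul_map_neg (hx : IsPoint q x) {s : Fin n → ℤ} (hs : ∀ j, pairZ (q j) s = 0) :
    x s * x (-s) = 1 := by
  have hs' : ∀ j, pairZ (q j) (-s) = 0 := fun j => by rw [pairZ_neg, hs j, neg_zero]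
  rw [← hx.2 s (-s) (inS_of_pairZ_eq_zero hs) (inS_of_pairZ_eq_zero hs'), add_neg_cancel, hx.1]

end IsPoint

section Semidirect

variable {n k : ℕ} {K : Type*} [Field K] {q e e1 e2 : Fin k → Fin n → ℤ}

lemma Compatible.pairZ_eq (he : Compatible (le_refl k) q e) (r s : Fin k) :
    pairZ (q s) (e r) = if r = s then -1 else 0 :=
  he.1 r s

lemma Compatible.pairZ_add_sum_smul (he : Compatible (le_refl k) q e) (u : Fin n → ℤ)
    (c : Fin k → ℤ) (s : Fin k) : pairZ (q s) (u + ∑ r, c r • e r) = pairZ (q s) u - c s := by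
  simp only [pairZ_add, pairZ_sum, pairZ_smul, he.pairZ_eq, mul_ite, mul_neg, mul_one, mul_zero,
    sum_ite_eq', mem_univ, if_true, ← sub_eq_add_neg]

lemma Compatible.pairZ_neg_self (he : Compatible (le_refl k) q e) (r s : Fin k) :
    pairZ (q s) (-(e r)) = if r = s then 1 else 0 := by
  rw [pairZ_neg, he.pairZ_eq]; split_ifs <;> rfl

lemma Compatible.pairZ_sub_eq_zero (he1 : Compatible (le_refl k) q e1)
    (he2 : Compatible (le_refl k) q e2) (r s : Fin k) : pairZ (q s) (e2 r - e1 r) = 0 := by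
  rw [pairZ_sub, he1.pairZ_eq, he2.pairZ_eq, sub_self]

lemma Compatible.inS_neg (he : Compatible (le_refl k) q e) (r : Fin k) : InS q (-(e r)) :=
  fun s => by rw [he.pairZ_neg_self]; split_ifs <;> decide

variable (q e1) in
/-- The projection `π` of `ℤ^n` onto `τ^⊥` along the vectors `e1 r`. -/
def linealProj : (Fin n → ℤ) →+ (Fin n → ℤ) :=
  AddMonoidHom.mk' (fun u => u + ∑ r, pairZ (q r) u • e1 r) fun u v => by
    simp only [pairZ_add, add_smul, sum_add_distrib]; abel

lemma linealProj_apply (u : Fin n → ℤ) :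
    linealProj q e1 u = u + ∑ r, pairZ (q r) u • e1 r := rfl

lemma Compatible.pairZ_linealProj (he1 : Compatible (le_refl k) q e1) (u : Fin n → ℤ)
    (s : Fin k) : pairZ (q s) (linealProj q e1 u) = 0 := by
  rw [linealProj_apply, he1.pairZ_add_sum_smul, sub_self]

lemma linealProj_of_pairZ_eq_zero {v : Fin n → ℤ} (hv : ∀ r, pairZ (q r) v = 0) :
    linealProj q e1 v = v := by
  simp [linealProj_apply, hv]

lemma Compatible.linealProj_self (he : Compatible (le_refl k) q e) (r : Fin k) :
    linealProj q e1 (e r) = e r - e1 r := by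
  simp [linealProj_apply, he.pairZ_eq, ite_smul, sub_eq_add_neg]

lemma Compatible.linealProj_add_sum_smul (he : Compatible (le_refl k) q e) (u : Fin n → ℤ)
    (c : Fin k → ℤ) :
    linealProj q e1 (u + ∑ r, c r • e r) = linealProj q e1 u + ∑ r, c r • (e r - e1 r) := by
  simp only [map_add, map_sum, map_zsmul, he.linealProj_self]

variable (q e1) in
/-- The point of `𝔾_a^k ⋊ T` with torus part `t` (a character of the lineality lattice) and
additive part `a`. -/
def ofCoords (t : (Fin n → ℤ) → K) (a : Fin k → K) : (Fin n → ℤ) → K :=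
  fun u => t (linealProj q e1 u) * ∏ r, a r ^ (pairZ (q r) u).toNat

lemma ofCoords_of_pairZ_eq_zero (t : (Fin n → ℤ) → K) (a : Fin k → K) {v : Fin n → ℤ}
    (hv : ∀ r, pairZ (q r) v = 0) : ofCoords q e1 t a v = t v := by
  simp [ofCoords, linealProj_of_pairZ_eq_zero hv, hv]

lemma Compatible.ofCoords_neg (he1 : Compatible (le_refl k) q e1) {t : (Fin n → ℤ) → K}
    (ht : t 0 = 1) (a : Fin k → K) (r : Fin k) : ofCoords q e1 t a (-(e1 r)) = a r := by
  simp [ofCoords, he1.pairZ_neg_self, he1.linealProj_self, ht, apply_ite Int.toNat, pow_ite]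

lemma Compatible.ofCoords_congr (he1 : Compatible (le_refl k) q e1) {t t' : (Fin n → ℤ) → K}
    (ht : ∀ v, (∀ r, pairZ (q r) v = 0) → t v = t' v) {a a' : Fin k → K} (ha : a = a')
    (u : Fin n → ℤ) : ofCoords q e1 t a u = ofCoords q e1 t' a' u := by
  rw [ofCoords, ofCoords, ht _ (he1.pairZ_linealProj u), ha]

lemma Compatible.isPoint_ofCoords (he1 : Compatible (le_refl k) q e1) {t : (Fin n → ℤ) → K}
    (ht0 : t 0 = 1)
    (ht : ∀ v w, (∀ r, pairZ (q r) v = 0) → (∀ r, pairZ (q r) w = 0) → t (v + w) = t v * t w)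
    (a : Fin k → K) : IsPoint q (ofCoords q e1 t a) := by
  refine ⟨by simp [ofCoords, ht0, pairZ], fun u v hu hv => ?_⟩
  simp only [ofCoords, map_add, ht _ _ (he1.pairZ_linealProj u) (he1.pairZ_linealProj v),
    pairZ_add, Int.toNat_add (hu _) (hv _), pow_add, prod_mul_distrib]
  ring

lemma xtau_refl_apply (u : Fin n → ℤ) :
    xtau K (le_refl k) q u = if ∀ r, pairZ (q r) u = 0 then 1 else 0 := rfl

lemma ofCoords_one_zero {u : Fin n → ℤ} (hu : InS q u) :
    ofCoords q e1 (1 : (Fin n → ℤ) → K) 0 u = xtau K (le_refl k) q u := by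
  by_cases h : ∀ r, pairZ (q r) u = 0
  · rw [ofCoords_of_pairZ_eq_zero _ _ h, xtau_refl_apply, if_pos h, Pi.one_apply]
  · obtain ⟨r, hr⟩ := not_forall.mp h
    have hpos : (pairZ (q r) u).toNat ≠ 0 := by have := hu r; omega
    rw [xtau_refl_apply, if_neg h, ofCoords, prod_eq_zero (mem_univ r) (zero_pow hpos), mul_zero]

lemma Compatible.eq_ofCoords (he1 : Compatible (le_refl k) q e1) {x : (Fin n → ℤ) → K}
    (hx : IsPoint q x) {u : Fin n → ℤ} (hu : InS q u) :
    x u = ofCoords q e1 x (fun r => x (-(e1 r))) u := by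
  have hdecomp : u = linealProj q e1 u + ∑ r, ((pairZ (q r) u).toNat : ℤ) • -(e1 r) := by
    simp only [linealProj_apply, Int.toNat_of_nonneg (hu _), smul_neg, sum_neg_distrib]
    abel
  conv_lhs => rw [hdecomp]
  exact hx.map_add_sum_smul _ he1.inS_neg _ _ (inS_of_pairZ_eq_zero (he1.pairZ_linealProj u))

lemma Compatible.apply_add_sum_smul (he1 : Compatible (le_refl k) q e1)
    (he : Compatible (le_refl k) q e) {x : (Fin n → ℤ) → K} (hx : IsPoint q x)
    (u : Fin n → ℤ) (c : Fin k → ℤ) (hv : InS q (u + ∑ r, c r • e r)) :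
    x (u + ∑ r, c r • e r) = x (linealProj q e1 u + ∑ r, c r • (e r - e1 r)) *
      ∏ r, x (-(e1 r)) ^ (pairZ (q r) u - c r).toNat := by
  rw [he1.eq_ofCoords hx hv, ofCoords, he.linealProj_add_sum_smul]
  simp only [he.pairZ_add_sum_smul]

lemma rmul_refl_apply (x y : (Fin n → ℤ) → K) (u : Fin n → ℤ) :
    rmul (le_refl k) q e1 e2 x y u =
      ∑ i ∈ Fintype.piFinset (fun r => range ((pairZ (q r) u).toNat + 1)),
        (∏ r, ((pairZ (q r) u).toNat.choose (i r) : K)) *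
          x (u + ∑ r, (i r : ℤ) • e2 r) * y (u + ∑ r, (pairZ (q r) u - i r) • e1 r) := rfl

lemma Compatible.rmul_summand_eq (he1 : Compatible (le_refl k) q e1)
    (he2 : Compatible (le_refl k) q e2) {x y : (Fin n → ℤ) → K} (hx : IsPoint q x)
    (hy : IsPoint q y) {u : Fin n → ℤ} (hu : InS q u) {i : Fin k → ℕ}
    (hi : ∀ r, i r ≤ (pairZ (q r) u).toNat) :
    (∏ r, ((pairZ (q r) u).toNat.choose (i r) : K)) *
        x (u + ∑ r, (i r : ℤ) • e2 r) * y (u + ∑ r, (pairZ (q r) u - i r) • e1 r) =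
      x (linealProj q e1 u) * y (linealProj q e1 u) *
        ∏ r, ((pairZ (q r) u).toNat.choose (i r) * ((x (e2 r - e1 r) * y (-(e1 r))) ^ i r *
          x (-(e1 r)) ^ ((pairZ (q r) u).toNat - i r))) := by
  have hP := inS_of_pairZ_eq_zero (he1.pairZ_linealProj u)
  have hmem2 : InS q (u + ∑ r, (i r : ℤ) • e2 r) := fun s => by
    rw [he2.pairZ_add_sum_smul]; have := hi s; have := hu s; omega
  have hmem1 : InS q (u + ∑ r, (pairZ (q r) u - i r) • e1 r) := fun s => by
    rw [he1.pairZ_add_sum_smul]; simp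
  have hx' : x (u + ∑ r, (i r : ℤ) • e2 r) = x (linealProj q e1 u) *
      (∏ r, x (e2 r - e1 r) ^ i r) * ∏ r, x (-(e1 r)) ^ ((pairZ (q r) u).toNat - i r) := by
    rw [he1.apply_add_sum_smul he2 hx _ _ hmem2, hx.map_add_sum_smul _
      (fun r => inS_of_pairZ_eq_zero (he1.pairZ_sub_eq_zero he2 r)) _ _ hP]
    congr 1
    refine prod_congr rfl fun r _ => ?_
    congr 1
    have := hu r
    omega
  have hy' : y (u + ∑ r, (pairZ (q r) u - i r) • e1 r) =
      y (linealProj q e1 u) * ∏ r, y (-(e1 r)) ^ i r := by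
    rw [he1.apply_add_sum_smul he1 hy _ _ hmem1]
    simp
  rw [hx', hy']
  simp only [prod_mul_distrib, mul_pow]
  ring

lemma Compatible.rmul_eq_ofCoords (he1 : Compatible (le_refl k) q e1)
    (he2 : Compatible (le_refl k) q e2) {x y : (Fin n → ℤ) → K} (hx : IsPoint q x)
    (hy : IsPoint q y) {u : Fin n → ℤ} (hu : InS q u) :
    rmul (le_refl k) q e1 e2 x y u =
      ofCoords q e1 (x * y) (fun r => x (-(e1 r)) + x (e2 r - e1 r) * y (-(e1 r))) u := by
  have hbinom : ∀ r, (x (-(e1 r)) + x (e2 r - e1 r) * y (-(e1 r))) ^ (pairZ (q r) u).toNat =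
      ∑ j ∈ range ((pairZ (q r) u).toNat + 1), ((pairZ (q r) u).toNat.choose j : K) *
        ((x (e2 r - e1 r) * y (-(e1 r))) ^ j * x (-(e1 r)) ^ ((pairZ (q r) u).toNat - j)) := by
    intro r
    rw [add_comm, add_pow]
    exact sum_congr rfl fun j _ => by ring
  rw [rmul_refl_apply, sum_congr rfl fun i hi => he1.rmul_summand_eq he2 hx hy hu fun r =>
      Nat.lt_succ_iff.mp (mem_range.mp (Fintype.mem_piFinset.mp hi r)),
    ← mul_sum, ofCoords, Pi.mul_apply]
  simp only [hbinom, prod_univ_sum]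

lemma Compatible.rmul_of_pairZ_eq_zero (he1 : Compatible (le_refl k) q e1)
    (he2 : Compatible (le_refl k) q e2) {x y : (Fin n → ℤ) → K} (hx : IsPoint q x)
    (hy : IsPoint q y) {v : Fin n → ℤ} (hv : ∀ r, pairZ (q r) v = 0) :
    rmul (le_refl k) q e1 e2 x y v = x v * y v := by
  rw [he1.rmul_eq_ofCoords he2 hx hy (inS_of_pairZ_eq_zero hv), ofCoords_of_pairZ_eq_zero _ _ hv,
    Pi.mul_apply]

lemma Compatible.rmul_neg (he1 : Compatible (le_refl k) q e1)
    (he2 : Compatible (le_refl k) q e2) {x y : (Fin n → ℤ) → K} (hx : IsPoint q x)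
    (hy : IsPoint q y) (r : Fin k) :
    rmul (le_refl k) q e1 e2 x y (-(e1 r)) = x (-(e1 r)) + x (e2 r - e1 r) * y (-(e1 r)) := by
  rw [he1.rmul_eq_ofCoords he2 hx hy (he1.inS_neg r),
    he1.ofCoords_neg (by rw [Pi.mul_apply, hx.1, hy.1, one_mul])]

lemma Compatible.isPoint_rmul (he1 : Compatible (le_refl k) q e1)
    (he2 : Compatible (le_refl k) q e2) {x y : (Fin n → ℤ) → K} (hx : IsPoint q x)
    (hy : IsPoint q y) : IsPoint q (rmul (le_refl k) q e1 e2 x y) := by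
  refine (he1.isPoint_ofCoords (t := x * y) (by simp [hx.1, hy.1]) (fun v w hv hw => ?_) _).congr
    fun u hu => (he1.rmul_eq_ofCoords he2 hx hy hu).symm
  simp only [Pi.mul_apply, hx.2 v w (inS_of_pairZ_eq_zero hv) (inS_of_pairZ_eq_zero hw),
    hy.2 v w (inS_of_pairZ_eq_zero hv) (inS_of_pairZ_eq_zero hw)]
  ring

lemma Compatible.rmul_assoc (he1 : Compatible (le_refl k) q e1)
    (he2 : Compatible (le_refl k) q e2) {x y z : (Fin n → ℤ) → K} (hx : IsPoint q x)
    (hy : IsPoint q y) (hz : IsPoint q z) {u : Fin n → ℤ} (hu : InS q u) :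
    rmul (le_refl k) q e1 e2 (rmul (le_refl k) q e1 e2 x y) z u =
      rmul (le_refl k) q e1 e2 x (rmul (le_refl k) q e1 e2 y z) u := by
  rw [he1.rmul_eq_ofCoords he2 (he1.isPoint_rmul he2 hx hy) hz hu,
    he1.rmul_eq_ofCoords he2 hx (he1.isPoint_rmul he2 hy hz) hu]
  refine he1.ofCoords_congr (fun v hv => ?_) (funext fun r => ?_) u
  · simp only [Pi.mul_apply, he1.rmul_of_pairZ_eq_zero he2 hx hy hv,
      he1.rmul_of_pairZ_eq_zero he2 hy hz hv, mul_assoc]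
  · rw [he1.rmul_neg he2 hx hy, he1.rmul_neg he2 hy hz,
      he1.rmul_of_pairZ_eq_zero he2 hx hy (he1.pairZ_sub_eq_zero he2 r)]
    ring

lemma xtau_of_pairZ_eq_zero {v : Fin n → ℤ} (hv : ∀ r, pairZ (q r) v = 0) :
    xtau K (le_refl k) q v = 1 :=
  if_pos hv

lemma Compatible.xtau_neg (he1 : Compatible (le_refl k) q e1) (r : Fin k) :
    xtau K (le_refl k) q (-(e1 r)) = 0 :=
  if_neg fun h => by simpa [he1.pairZ_neg_self] using h r

lemma Compatible.isPoint_xtau (he1 : Compatible (le_refl k) q e1) :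
    IsPoint q (xtau K (le_refl k) q) :=
  (he1.isPoint_ofCoords (t := 1) rfl (fun _ _ _ _ => (mul_one 1).symm) 0).congr
    fun _ hu => ofCoords_one_zero hu

lemma Compatible.xtau_rmul (he1 : Compatible (le_refl k) q e1)
    (he2 : Compatible (le_refl k) q e2) {x : (Fin n → ℤ) → K} (hx : IsPoint q x)
    {u : Fin n → ℤ} (hu : InS q u) :
    rmul (le_refl k) q e1 e2 (xtau K (le_refl k) q) x u = x u := by
  rw [he1.rmul_eq_ofCoords he2 he1.isPoint_xtau hx hu, he1.eq_ofCoords hx hu]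
  refine he1.ofCoords_congr (fun v hv => ?_) (funext fun r => ?_) u
  · rw [Pi.mul_apply, xtau_of_pairZ_eq_zero hv, one_mul]
  · rw [he1.xtau_neg, xtau_of_pairZ_eq_zero (he1.pairZ_sub_eq_zero he2 r), zero_add, one_mul]

lemma Compatible.rmul_xtau (he1 : Compatible (le_refl k) q e1)
    (he2 : Compatible (le_refl k) q e2) {x : (Fin n → ℤ) → K} (hx : IsPoint q x)
    {u : Fin n → ℤ} (hu : InS q u) :
    rmul (le_refl k) q e1 e2 x (xtau K (le_refl k) q) u = x u := by
  rw [he1.rmul_eq_ofCoords he2 hx he1.isPoint_xtau hu, he1.eq_ofCoords hx hu]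
  refine he1.ofCoords_congr (fun v hv => ?_) (funext fun r => ?_) u
  · rw [Pi.mul_apply, xtau_of_pairZ_eq_zero hv, mul_one]
  · rw [he1.xtau_neg, mul_zero, add_zero]

variable (q e1 e2) in
/-- In coordinates, `(t, a)⁻¹ = (t⁻¹, -t(f)⁻¹ • a)` where `f r = e2 r - e1 r`. -/
def pointInv (x : (Fin n → ℤ) → K) : (Fin n → ℤ) → K :=
  ofCoords q e1 (fun v => x (-v)) fun r => -(x (-(e1 r)) * x (e1 r - e2 r))

lemma Compatible.isPoint_pointInv (he1 : Compatible (le_refl k) q e1) {x : (Fin n → ℤ) → K}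
    (hx : IsPoint q x) : IsPoint q (pointInv q e1 e2 x) := by
  refine he1.isPoint_ofCoords (by rw [neg_zero, hx.1]) (fun v w hv hw => ?_) _
  have hneg : ∀ {v : Fin n → ℤ}, (∀ r, pairZ (q r) v = 0) → InS q (-v) := fun hv =>
    inS_of_pairZ_eq_zero fun r => by rw [pairZ_neg, hv r, neg_zero]
  rw [neg_add, hx.2 _ _ (hneg hv) (hneg hw)]

lemma Compatible.rmul_pointInv (he1 : Compatible (le_refl k) q e1)
    (he2 : Compatible (le_refl k) q e2) {x : (Fin n → ℤ) → K} (hx : IsPoint q x)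
    {u : Fin n → ℤ} (hu : InS q u) :
    rmul (le_refl k) q e1 e2 x (pointInv q e1 e2 x) u = xtau K (le_refl k) q u := by
  rw [he1.rmul_eq_ofCoords he2 hx (he1.isPoint_pointInv hx) hu, ← ofCoords_one_zero hu]
  refine he1.ofCoords_congr (fun v hv => ?_) (funext fun r => ?_) u
  · rw [Pi.mul_apply, pointInv, ofCoords_of_pairZ_eq_zero _ _ hv, hx.mul_map_neg hv, Pi.one_apply]
  · have hf := hx.mul_map_neg (he1.pairZ_sub_eq_zero he2 r)
    rw [neg_sub] at hf
    rw [pointInv, he1.ofCoords_neg (by rw [neg_zero, hx.1]), Pi.zero_apply]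
    linear_combination (-x (-(e1 r))) * hf

lemma Compatible.pointInv_rmul (he1 : Compatible (le_refl k) q e1)
    (he2 : Compatible (le_refl k) q e2) {x : (Fin n → ℤ) → K} (hx : IsPoint q x)
    {u : Fin n → ℤ} (hu : InS q u) :
    rmul (le_refl k) q e1 e2 (pointInv q e1 e2 x) x u = xtau K (le_refl k) q u := by
  rw [he1.rmul_eq_ofCoords he2 (he1.isPoint_pointInv hx) hx hu, ← ofCoords_one_zero hu]
  refine he1.ofCoords_congr (fun v hv => ?_) (funext fun r => ?_) u
  · rw [Pi.mul_apply, pointInv, ofCoords_of_pairZ_eq_zero _ _ hv, mul_comm, hx.mul_map_neg hv,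
      Pi.one_apply]
  · rw [pointInv, he1.ofCoords_neg (by rw [neg_zero, hx.1]),
      ofCoords_of_pairZ_eq_zero _ _ (he1.pairZ_sub_eq_zero he2 r), neg_sub, Pi.zero_apply]
    ring

end Semidirect

theorem statement_6_general {n k : ℕ} {K : Type*} [Field K]
    (q : Fin k → Fin n → ℤ) (e1 e2 : Fin k → Fin n → ℤ)
    (he1 : Compatible (le_refl k) q e1) (he2 : Compatible (le_refl k) q e2) :
    (∀ x y z : (Fin n → ℤ) → K, IsPoint q x → IsPoint q y → IsPoint q z →
      IsPoint q (rmul (le_refl k) q e1 e2 x y) ∧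
      ∀ u : Fin n → ℤ, InS q u →
        rmul (le_refl k) q e1 e2 (rmul (le_refl k) q e1 e2 x y) z u
          = rmul (le_refl k) q e1 e2 x (rmul (le_refl k) q e1 e2 y z) u) ∧
    IsPoint q (xtau K (le_refl k) q) ∧
    (∀ x : (Fin n → ℤ) → K, IsPoint q x → ∀ u : Fin n → ℤ, InS q u →
      rmul (le_refl k) q e1 e2 (xtau K (le_refl k) q) x u = x u ∧
      rmul (le_refl k) q e1 e2 x (xtau K (le_refl k) q) u = x u) ∧
    (∀ x : (Fin n → ℤ) → K, IsPoint q x →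
      ∃ y : (Fin n → ℤ) → K, IsPoint q y ∧ ∀ u : Fin n → ℤ, InS q u →
        rmul (le_refl k) q e1 e2 x y u = xtau K (le_refl k) q u ∧
        rmul (le_refl k) q e1 e2 y x u = xtau K (le_refl k) q u) :=
  ⟨fun _ _ _ hx hy hz => ⟨he1.isPoint_rmul he2 hx hy, fun _ hu => he1.rmul_assoc he2 hx hy hz hu⟩,
    he1.isPoint_xtau,
    fun _ hx _ hu => ⟨he1.xtau_rmul he2 hx hu, he1.rmul_xtau he2 hx hu⟩,
    fun x hx => ⟨pointInv q e1 e2 x, he1.isPoint_pointInv hx,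
      fun _ hu => ⟨he1.rmul_pointInv he2 hx hu, he1.pointInv_rmul he2 hx hu⟩⟩⟩

theorem statement_6 {n k : ℕ} {K : Type*} [Field K] [CharZero K]
    (hn : 1 ≤ n) (hk : 1 ≤ k)
    (q : Fin k → Fin n → ℤ) (e1 e2 : Fin k → Fin n → ℤ)
    (he1 : Compatible (le_refl k) q e1) (he2 : Compatible (le_refl k) q e2) :
    (∀ x y z : (Fin n → ℤ) → K, IsPoint q x → IsPoint q y → IsPoint q z →
      IsPoint q (rmul (le_refl k) q e1 e2 x y) ∧
      ∀ u : Fin n → ℤ, InS q u →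
        rmul (le_refl k) q e1 e2 (rmul (le_refl k) q e1 e2 x y) z u
          = rmul (le_refl k) q e1 e2 x (rmul (le_refl k) q e1 e2 y z) u) ∧
    IsPoint q (xtau K (le_refl k) q) ∧
    (∀ x : (Fin n → ℤ) → K, IsPoint q x → ∀ u : Fin n → ℤ, InS q u →
      rmul (le_refl k) q e1 e2 (xtau K (le_refl k) q) x u = x u ∧
      rmul (le_refl k) q e1 e2 x (xtau K (le_refl k) q) u = x u) ∧
    (∀ x : (Fin n → ℤ) → K, IsPoint q x →
      ∃ y : (Fin n → ℤ) → K, IsPoint q y ∧ ∀ u : Fin n → ℤ, InS q u →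
        rmul (le_refl k) q e1 e2 x y u = xtau K (le_refl k) q u ∧
        rmul (le_refl k) q e1 e2 y x u = xtau K (le_refl k) q u) :=
  statement_6_general q e1 e2 he1 he2
end

section
/- Assume p_1, …, p_k form part of a ℤ-basis of ℤ^n (the face τ is regular) and that there exists v ∈ ℤ^n with ⟨p_r, v⟩ = 0 for all r ≤ k and ⟨q_j, v⟩ > 0 for all j > k (τ is a face of σ). Then for any vectors c_1, …, c_k ∈ ℤ^n satisfying ⟨p_s, c_r⟩ = 0 for all r, s ≤ k (i.e. c_r ∈ τ^⊥ ∩ M), there exists a set of Demazure roots e_1^{(r)}, e_2^{(r)} (r = 1, …, k) compatible with τ such that e_1^{(r)} − e_2^{(r)} = c_r for all r. (This is the Lemma inside the proof of Proposition 4.3, which yields that every group G_χ̄ occurs as the group of invertible elements of a root monoid on X_σ.) -/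
open Finset

/-! Roots are built as `w_r + N • v` (plus `c_r` for the first family): `w_r` is minus the dual
basis vector of `p_r`, which gives the pairings `-δ_rs` with the `p_s`; adding multiples of the
face vector `v` keeps those pairings and, for `N` large, makes all pairings with the other rays
nonnegative. -/

open Filter

theorem pairZ_add_s9 {n : ℕ} (u x y : Fin n → ℤ) : pairZ u (x + y) = pairZ u x + pairZ u y :=
  dotProduct_add u x y

theorem pairZ_smul_s9 {n : ℕ} (u x : Fin n → ℤ) (z : ℤ) : pairZ u (z • x) = z * pairZ u x :=
  dotProduct_smul z u x

theorem exists_pairZ_basis_eq_neg_ite {n : ℕ} (b : Module.Basis (Fin n) ℤ (Fin n → ℤ))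
    (i : Fin n) : ∃ u : Fin n → ℤ, ∀ s, pairZ (b s) u = if s = i then -1 else 0 := by
  refine ⟨-(dotProductEquiv ℤ (Fin n)).symm (b.coord i), fun s => ?_⟩
  have hcoord : (dotProductEquiv ℤ (Fin n)).symm (b.coord i) ⬝ᵥ b s = b.coord i (b s) :=
    congrArg (fun f : Module.Dual ℤ (Fin n → ℤ) => f (b s))
      ((dotProductEquiv ℤ (Fin n)).apply_symm_apply (b.coord i))
  rw [pairZ, ← dotProduct, dotProduct_neg, dotProduct_comm, hcoord, Module.Basis.coord_apply,
    Module.Basis.repr_self, Finsupp.single_apply]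
  simp only [eq_comm, apply_ite Neg.neg, neg_zero]

theorem exists_pairZ_eq_neg_ite {n m k : ℕ} (hkm : k ≤ m) (hkn : k ≤ n)
    (q : Fin m → Fin n → ℤ) (b : Module.Basis (Fin n) ℤ (Fin n → ℤ))
    (hb : ∀ r : Fin k, b (Fin.castLE hkn r) = q (Fin.castLE hkm r)) :
    ∃ w : Fin k → Fin n → ℤ,
      ∀ r s : Fin k, pairZ (q (Fin.castLE hkm s)) (w r) = if r = s then -1 else 0 := by
  choose w hw using fun r : Fin k => exists_pairZ_basis_eq_neg_ite b (Fin.castLE hkn r)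
  refine ⟨w, fun r s => ?_⟩
  simp only [← hb, hw, (Fin.castLE_injective hkn).eq_iff, eq_comm]

theorem eventually_nonneg_pairZ_add_smul {n : ℕ} {u v : Fin n → ℤ} (hv : 0 < pairZ u v)
    (x : Fin n → ℤ) : ∀ᶠ N : ℤ in atTop, 0 ≤ pairZ u (x + N • v) := by
  filter_upwards [eventually_ge_atTop |pairZ u x|] with N hN
  have hxN : -N ≤ pairZ u x := (neg_le_neg hN).trans (neg_abs_le _)
  have hNv : N ≤ N * pairZ u v := le_mul_of_one_le_right ((abs_nonneg _).trans hN) hv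
  rw [pairZ_add_s9, pairZ_smul_s9]
  linarith

theorem eventually_forall_nonneg_pairZ_add_smul {n : ℕ} {ι κ : Type*} [Finite ι] [Finite κ]
    {u : κ → Fin n → ℤ} {P : κ → Prop} {v : Fin n → ℤ} (hv : ∀ j, P j → 0 < pairZ (u j) v)
    (x : ι → Fin n → ℤ) :
    ∀ᶠ N : ℤ in atTop, ∀ i j, P j → 0 ≤ pairZ (u j) (x i + N • v) :=
  eventually_all.2 fun i => eventually_all.2 fun j => eventually_imp_distrib_left.2
    fun hj => eventually_nonneg_pairZ_add_smul (hv j hj) (x i)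

theorem compatible_add_smul {n m k : ℕ} (hkm : k ≤ m) {q : Fin m → Fin n → ℤ}
    {e : Fin k → Fin n → ℤ} {v : Fin n → ℤ} {N : ℤ}
    (he : ∀ r s : Fin k, pairZ (q (Fin.castLE hkm s)) (e r) = if r = s then -1 else 0)
    (hv : ∀ r : Fin k, pairZ (q (Fin.castLE hkm r)) v = 0)
    (hN : ∀ (r : Fin k) (j : Fin m), k ≤ (j : ℕ) → 0 ≤ pairZ (q j) (e r + N • v)) :
    Compatible hkm q fun r => e r + N • v := by
  refine ⟨fun r s => ?_, hN⟩
  rw [pairZ_add_s9, pairZ_smul_s9, he, hv, mul_zero, add_zero]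

theorem statement_9_general {n m k : ℕ} (hkm : k ≤ m) (hkn : k ≤ n)
    (q : Fin m → Fin n → ℤ)
    (b : Module.Basis (Fin n) ℤ (Fin n → ℤ))
    (hb : ∀ r : Fin k, b (Fin.castLE hkn r) = q (Fin.castLE hkm r))
    (hface : ∃ v : Fin n → ℤ, (∀ r : Fin k, pairZ (q (Fin.castLE hkm r)) v = 0) ∧
      ∀ j : Fin m, k ≤ (j : ℕ) → 0 < pairZ (q j) v)
    (c : Fin k → Fin n → ℤ)
    (hc : ∀ r s : Fin k, pairZ (q (Fin.castLE hkm s)) (c r) = 0) :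
    ∃ e1 e2 : Fin k → Fin n → ℤ,
      Compatible hkm q e1 ∧ Compatible hkm q e2 ∧ ∀ r : Fin k, e1 r - e2 r = c r := by
  obtain ⟨v, hv, hvpos⟩ := hface
  obtain ⟨w, hw⟩ := exists_pairZ_eq_neg_ite hkm hkn q b hb
  have hwc : ∀ r s, pairZ (q (Fin.castLE hkm s)) (w r + c r) = if r = s then -1 else 0 :=
    fun r s => by rw [pairZ_add_s9, hw, hc, add_zero]
  obtain ⟨N, hN1, hN2⟩ :=
    ((eventually_forall_nonneg_pairZ_add_smul hvpos fun r => w r + c r).and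
      (eventually_forall_nonneg_pairZ_add_smul hvpos w)).exists
  refine ⟨fun r => w r + c r + N • v, fun r => w r + N • v, compatible_add_smul hkm hwc hv hN1,
    compatible_add_smul hkm hw hv hN2, fun r => by rw [add_sub_add_right_eq_sub, add_sub_cancel_left]⟩

theorem statement_9 {n m k : ℕ} (hn : 1 ≤ n) (hk : 1 ≤ k) (hkm : k ≤ m) (hkn : k ≤ n)
    (q : Fin m → Fin n → ℤ)
    (b : Module.Basis (Fin n) ℤ (Fin n → ℤ))
    (hb : ∀ r : Fin k, b (Fin.castLE hkn r) = q (Fin.castLE hkm r))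
    (hface : ∃ v : Fin n → ℤ, (∀ r : Fin k, pairZ (q (Fin.castLE hkm r)) v = 0) ∧
      ∀ j : Fin m, k ≤ (j : ℕ) → 0 < pairZ (q j) v)
    (c : Fin k → Fin n → ℤ)
    (hc : ∀ r s : Fin k, pairZ (q (Fin.castLE hkm s)) (c r) = 0) :
    ∃ e1 e2 : Fin k → Fin n → ℤ,
      Compatible hkm q e1 ∧ Compatible hkm q e2 ∧ ∀ r : Fin k, e1 r - e2 r = c r :=
  statement_9_general hkm hkn q b hb hface c hc
end
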